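/- arXiv:1710.08005 — 5 statements merged into one kernel-verified Lean document; each statement's English description precedes it below -/
import Mathlib

section
/- With d = 1 and S = [−1/2, 1/2], for any prediction ĉ ∈ ℝ and true label c ∈ {−1, +1}, the SPO loss equals the 0-1 classification loss: ℓ_SPO(ĉ, c) = 0 if ĉ·c > 0 and ℓ_SPO(ĉ, c) = 1 if ĉ·c ≤ 0. -/
open MeasureTheory Set

noncomputable section

/-- The feasible region `S = [-1/2, 1/2] ⊆ ℝ`. -/
def S1 : Set ℝ := Set.Icc (-(1/2) : ℝ) (1/2)

/-- `z*(c) = min_{w ∈ S} c·w`. -/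
def zS1 (c : ℝ) : ℝ := sInf ((fun w => c * w) '' S1)

/-- `ξ_S(c) = max_{w ∈ S} c·w`. -/
def xiS1 (c : ℝ) : ℝ := sSup ((fun w => c * w) '' S1)

/-- `W*(c) = argmin_{w ∈ S} c·w`. -/
def WS1 (c : ℝ) : Set ℝ := {w | w ∈ S1 ∧ ∀ u ∈ S1, c * w ≤ c * u}

/-- SPO loss `ℓ_SPO(ĉ, c) = max_{w ∈ W*(ĉ)} c·w − z*(c)`. -/
def lSPO1 (chat c : ℝ) : ℝ := sSup ((fun w => c * w) '' WS1 chat) - zS1 c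

/-- with `S = [-1/2, 1/2]` and labels `c ∈ {-1, +1}`, the SPO loss equals the
0-1 classification loss. -/
theorem spo_loss_eq_zero_one_loss (chat c : ℝ) (hc : c = 1 ∨ c = -1) :
    (chat * c > 0 → lSPO1 chat c = 0) ∧ (chat * c ≤ 0 → lSPO1 chat c = 1) := by
  have himg : ((fun w => c * w) '' S1) = S1 := by
    rcases hc with h | h <;> subst h <;> ext x <;>
      simp only [S1, Set.mem_image, Set.mem_Icc] <;> constructor
    · rintro ⟨w, ⟨h1, h2⟩, rfl⟩; constructor <;> linarith
    · intro ⟨h1, h2⟩; exact ⟨x, ⟨h1, h2⟩, one_mul x⟩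
    · rintro ⟨w, ⟨h1, h2⟩, rfl⟩; constructor <;> linarith
    · intro ⟨h1, h2⟩; exact ⟨-x, ⟨by linarith, by linarith⟩, by ring⟩
  have hz : zS1 c = -(1/2) := by
    rw [zS1, himg, S1, csInf_Icc (by norm_num)]
  have hmemL : (-(1/2) : ℝ) ∈ S1 := by simp [S1]
  have hmemR : ((1/2) : ℝ) ∈ S1 := by simp [S1]
  have Wpos : 0 < chat → WS1 chat = {-(1/2)} := by
    intro h
    ext w
    simp only [WS1, Set.mem_setOf_eq, Set.mem_singleton_iff, S1, Set.mem_Icc]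
    constructor
    · rintro ⟨⟨h1, h2⟩, hmin⟩
      have := hmin _ hmemL
      have : w ≤ -(1/2) := by
        by_contra hcon
        nlinarith
      linarith
    · rintro rfl
      refine ⟨⟨le_refl _, by norm_num⟩, fun u hu => ?_⟩
      nlinarith [hu.1]
  have Wneg : chat < 0 → WS1 chat = {(1/2)} := by
    intro h
    ext w
    simp only [WS1, Set.mem_setOf_eq, Set.mem_singleton_iff, S1, Set.mem_Icc]
    constructor
    · rintro ⟨⟨h1, h2⟩, hmin⟩
      have := hmin _ hmemR
      have : (1/2 : ℝ) ≤ w := by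
        by_contra hcon
        nlinarith
      linarith
    · rintro rfl
      refine ⟨⟨by norm_num, le_refl _⟩, fun u hu => ?_⟩
      nlinarith [hu.2]
  have Wzero : chat = 0 → WS1 chat = S1 := by
    intro h; subst h; ext w; simp [WS1]
  constructor
  · intro hpos
    rcases hc with h | h <;> subst h
    · have hch : 0 < chat := by linarith
      rw [lSPO1, Wpos hch, hz, Set.image_singleton, csSup_singleton]
      ring
    · have hch : chat < 0 := by nlinarith
      rw [lSPO1, Wneg hch, hz, Set.image_singleton, csSup_singleton]
      ring
  · intro hle
    rcases hc with h | h <;> subst h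
    · rcases lt_trichotomy chat 0 with hch | hch | hch
      · rw [lSPO1, Wneg hch, hz, Set.image_singleton, csSup_singleton]; ring
      · rw [lSPO1, Wzero hch, himg, hz, S1, csSup_Icc (by norm_num)]; ring
      · exfalso; nlinarith
    · rcases lt_trichotomy chat 0 with hch | hch | hch
      · exfalso; nlinarith
      · rw [lSPO1, Wzero hch, himg, hz, S1, csSup_Icc (by norm_num)]; ring
      · rw [lSPO1, Wpos hch, hz, Set.image_singleton, csSup_singleton]; ring
end
end

section
/- Strong duality for the SPO loss: for any ĉ, c ∈ ℝ^d, ℓ_SPO(ĉ, c) = inf_{α ≥ 0} { ξ_S(c − αĉ) + α z*(ĉ) } − z*(c). -/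
open MeasureTheory Set

noncomputable section

/-- Dot product on `Fin d → ℝ`. -/
def dotp {d : ℕ} (c w : Fin d → ℝ) : ℝ := ∑ i, c i * w i

/-- Optimal value `z*(c) = min_{w ∈ S} cᵀw`. -/
def zS {d : ℕ} (S : Set (Fin d → ℝ)) (c : Fin d → ℝ) : ℝ := sInf ((fun w => dotp c w) '' S)

/-- Support function `ξ_S(c) = max_{w ∈ S} cᵀw`. -/
def xiS {d : ℕ} (S : Set (Fin d → ℝ)) (c : Fin d → ℝ) : ℝ := sSup ((fun w => dotp c w) '' S)

/-- Optimal solution set `W*(c) = argmin_{w ∈ S} cᵀw`. -/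
def WS {d : ℕ} (S : Set (Fin d → ℝ)) (c : Fin d → ℝ) : Set (Fin d → ℝ) :=
  {w | w ∈ S ∧ ∀ u ∈ S, dotp c w ≤ dotp c u}

/-- SPO loss `ℓ_SPO(ĉ, c) = max_{w ∈ W*(ĉ)} cᵀw − z*(c)`. -/
def lSPO {d : ℕ} (S : Set (Fin d → ℝ)) (chat c : Fin d → ℝ) : ℝ :=
  sSup ((fun w => dotp c w) '' WS S chat) - zS S c

/-- SPO+ loss `ℓ_SPO+(ĉ, c) = ξ_S(c − 2ĉ) + 2ĉᵀw*(c) − z*(c)` given a selection `wstar`. -/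
def lSPOp {d : ℕ} (S : Set (Fin d → ℝ)) (wstar : (Fin d → ℝ) → (Fin d → ℝ))
    (chat c : Fin d → ℝ) : ℝ :=
  xiS S (c - (2 : ℝ) • chat) + 2 * dotp chat (wstar c) - zS S c

/-!
Every `w ∈ W*(ĉ)` satisfies `ĉᵀw = z*(ĉ)`, so `cᵀw = (c - αĉ)ᵀw + α z*(ĉ)` and weak duality is
immediate. For the converse, `ξ_S(c - αĉ) + α z*(ĉ) = max_{w ∈ S} (cᵀw - α (ĉᵀw - z*(ĉ)))` is a
penalty formulation of the primal problem, and on a compact set the penalty is exact up to `ε`: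
on the compact set where `cᵀw` exceeds the primal value by `ε` the gap `ĉᵀw - z*(ĉ)` is bounded
below by some `δ > 0`, so a large multiplier pushes the objective there below the primal value.
-/

theorem IsCompact.exists_forall_sub_mul_le {X : Type*} [TopologicalSpace X] {S : Set X}
    {f p : X → ℝ} (hS : IsCompact S) (hf : Continuous f) (hp : Continuous p)
    (hp₀ : ∀ x ∈ S, 0 ≤ p x) {M : ℝ} (hM : ∀ x ∈ S, p x = 0 → f x ≤ M) {ε : ℝ} (hε : 0 < ε) :
    ∃ α ≥ 0, ∀ x ∈ S, f x - α * p x ≤ M + ε := by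
  set K := S ∩ f ⁻¹' Ici (M + ε)
  have hK : IsCompact K := hS.inter_right (isClosed_Ici.preimage hf)
  have hpK : ∀ x ∈ K, 0 < p x := fun x ⟨hxS, hx⟩ =>
    (hp₀ x hxS).lt_of_ne' fun h => by linarith [hM x hxS h, show M + ε ≤ f x from hx]
  obtain ⟨δ, hδ, hδK⟩ := hK.exists_forall_le' hp.continuousOn hpK
  obtain ⟨B, hB⟩ := hS.bddAbove_image hf.continuousOn
  set α := max 0 ((B - M) / δ)
  have hαδ : B - M ≤ α * δ := (div_le_iff₀ hδ).1 (le_max_right _ _)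
  refine ⟨α, le_max_left _ _, fun x hxS => ?_⟩
  have hfx : f x ≤ B := hB (mem_image_of_mem f hxS)
  by_cases hx : M + ε ≤ f x
  · have : α * δ ≤ α * p x := mul_le_mul_of_nonneg_left (hδK x ⟨hxS, hx⟩) (le_max_left _ _)
    linarith
  · have : 0 ≤ α * p x := mul_nonneg (le_max_left _ _) (hp₀ x hxS)
    linarith [not_le.1 hx]

section SPO

variable {d : ℕ} {S : Set (Fin d → ℝ)}

theorem continuous_dotp (v : Fin d → ℝ) : Continuous (dotp v) :=
  continuous_const.dotProduct continuous_id

theorem dotp_sub_smul (c chat w : Fin d → ℝ) (α : ℝ) :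
    dotp (c - α • chat) w = dotp c w - α * dotp chat w := by
  change (c - α • chat) ⬝ᵥ w = c ⬝ᵥ w - α * chat ⬝ᵥ w
  rw [sub_dotProduct, smul_dotProduct, smul_eq_mul]

theorem le_xiS (hS : IsCompact S) (v : Fin d → ℝ) {w : Fin d → ℝ} (hw : w ∈ S) :
    dotp v w ≤ xiS S v :=
  le_csSup (hS.bddAbove_image (continuous_dotp v).continuousOn) (mem_image_of_mem _ hw)

theorem xiS_le (hne : S.Nonempty) {v : Fin d → ℝ} {b : ℝ} (h : ∀ w ∈ S, dotp v w ≤ b) :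
    xiS S v ≤ b :=
  csSup_le (hne.image _) (forall_mem_image.2 h)

theorem zS_le (hS : IsCompact S) (v : Fin d → ℝ) {w : Fin d → ℝ} (hw : w ∈ S) :
    zS S v ≤ dotp v w :=
  csInf_le (hS.bddBelow_image (continuous_dotp v).continuousOn) (mem_image_of_mem _ hw)

theorem mem_WS_iff (hS : IsCompact S) {v w : Fin d → ℝ} :
    w ∈ WS S v ↔ w ∈ S ∧ dotp v w = zS S v := by
  constructor
  · rintro ⟨hw, hmin⟩
    exact ⟨hw, le_antisymm (le_csInf ⟨_, mem_image_of_mem _ hw⟩ (forall_mem_image.2 hmin))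
      (zS_le hS v hw)⟩
  · rintro ⟨hw, heq⟩
    exact ⟨hw, fun u hu => heq ▸ zS_le hS v hu⟩

theorem WS_nonempty (hS : IsCompact S) (hne : S.Nonempty) (v : Fin d → ℝ) : (WS S v).Nonempty :=
  let ⟨w, hw, hmin⟩ := hS.exists_isMinOn hne (continuous_dotp v).continuousOn
  ⟨w, hw, fun _ hu => hmin hu⟩

theorem sSup_WS_le (hS : IsCompact S) (hne : S.Nonempty) (chat c : Fin d → ℝ) (α : ℝ) :
    sSup ((fun w => dotp c w) '' WS S chat) ≤ xiS S (c - α • chat) + α * zS S chat := by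
  refine csSup_le ((WS_nonempty hS hne chat).image _) (forall_mem_image.2 fun w hw => ?_)
  obtain ⟨hwS, hwz⟩ := (mem_WS_iff hS).1 hw
  have := le_xiS hS (c - α • chat) hwS
  rw [dotp_sub_smul, hwz] at this
  linarith

theorem exists_xiS_sub_smul_le (hS : IsCompact S) (hne : S.Nonempty) (chat c : Fin d → ℝ)
    {ε : ℝ} (hε : 0 < ε) : ∃ α ≥ 0,
      xiS S (c - α • chat) + α * zS S chat ≤ sSup ((fun w => dotp c w) '' WS S chat) + ε := by
  have hbdd : BddAbove ((fun w => dotp c w) '' WS S chat) :=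
    (hS.bddAbove_image (continuous_dotp c).continuousOn).mono (image_mono fun _ hw => hw.1)
  obtain ⟨α, hα, hle⟩ := hS.exists_forall_sub_mul_le (p := fun w => dotp chat w - zS S chat)
    (continuous_dotp c) ((continuous_dotp chat).sub continuous_const)
    (fun w hw => sub_nonneg.2 (zS_le hS chat hw))
    (fun w hw hgap => le_csSup hbdd
      (mem_image_of_mem _ ((mem_WS_iff hS).2 ⟨hw, sub_eq_zero.1 hgap⟩)))
    hε
  refine ⟨α, hα, ?_⟩
  have : xiS S (c - α • chat) ≤ sSup ((fun w => dotp c w) '' WS S chat) + ε - α * zS S chat :=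
    xiS_le hne fun w hw => by
      have := hle w hw
      rw [dotp_sub_smul]
      linarith
  linarith

end SPO

theorem spo_loss_strong_duality_general {d : ℕ} (S : Set (Fin d → ℝ))
    (hS : S.Nonempty) (hSc : IsCompact S)
    (chat c : Fin d → ℝ) :
    lSPO S chat c =
      sInf ((fun α : ℝ => xiS S (c - α • chat) + α * zS S chat) '' Set.Ici (0 : ℝ)) -
        zS S c := by
  have hweak := sSup_WS_le hSc hS chat c
  refine congrArg (· - zS S c) (le_antisymm ?_ ?_)
  · exact le_csInf ⟨_, mem_image_of_mem _ (mem_Ici.2 le_rfl)⟩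
      (forall_mem_image.2 fun α _ => hweak α)
  · refine le_of_forall_pos_le_add fun ε hε => ?_
    obtain ⟨α, hα, hle⟩ := exists_xiS_sub_smul_le hSc hS chat c hε
    exact (csInf_le ⟨_, forall_mem_image.2 fun α _ => hweak α⟩ (mem_image_of_mem _ hα)).trans hle

/-- strong duality for the SPO loss:
`ℓ_SPO(ĉ, c) = inf_{α ≥ 0} { ξ_S(c − αĉ) + α z*(ĉ) } − z*(c)`. -/
theorem spo_loss_strong_duality {d : ℕ} (S : Set (Fin d → ℝ))
    (hS : S.Nonempty) (hSc : IsCompact S) (hScv : Convex ℝ S)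
    (chat c : Fin d → ℝ) :
    lSPO S chat c =
      sInf ((fun α : ℝ => xiS S (c - α • chat) + α * zS S chat) '' Set.Ici (0 : ℝ)) -
        zS S c :=
  spo_loss_strong_duality_general S hS hSc chat c
end
end

section
/- In the one-dimensional example S = [−1/2, 1/2] with c ~ N(0,1), the prediction ĉ = 1 strictly dominates ĉ = 0 = c̄ pointwise in SPO loss: ℓ_SPO(1, c) ≤ ℓ_SPO(0, c) for all c, with strict inequality for c > 0; hence R_SPO(1) < R_SPO(0), so the mean c̄ = 0 is not a minimizer of the SPO risk. -/
open MeasureTheory Set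

noncomputable section

lemma himg (c : ℝ) : ((fun w => c * w) '' S1) = Icc (-(|c|/2)) (|c|/2) := by
  rcases le_or_gt 0 c with hc | hc
  · rw [show (fun w : ℝ => c * w) = (c * ·) from rfl, S1,
      image_mul_left_Icc hc (by norm_num : (-(1/2) : ℝ) ≤ 1/2),
      abs_of_nonneg hc]
    congr 1 <;> ring_nf
  · have h : (fun w : ℝ => c * w) = (fun x : ℝ => -x) ∘ ((-c) * ·) := by
      funext w; simp only [Function.comp]; ring
    rw [h, Set.image_comp, S1,
      image_mul_left_Icc (by linarith : (0:ℝ) ≤ -c) (by norm_num : (-(1/2) : ℝ) ≤ 1/2),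
      Set.image_neg_eq_neg, Set.neg_Icc, abs_of_neg hc]
    congr 1 <;> ring_nf

lemma zS1_eq (c : ℝ) : zS1 c = -(|c|/2) := by
  rw [zS1, himg, csInf_Icc (neg_le_self (by positivity))]

lemma WS1_zero : WS1 0 = S1 := by
  ext w; simp [WS1]

lemma WS1_one : WS1 1 = {(-(1/2) : ℝ)} := by
  ext w
  constructor
  · rintro ⟨hw, hmin⟩
    have := hmin (-(1/2)) (by constructor <;> norm_num)
    simp only [one_mul] at this
    have := hw.1
    simp only [Set.mem_singleton_iff]
    linarith
  · rintro rfl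
    refine ⟨⟨le_refl _, by norm_num⟩, fun u hu => ?_⟩
    simpa using hu.1

lemma lSPO1_zero (c : ℝ) : lSPO1 0 c = |c| := by
  rw [lSPO1, WS1_zero, himg, zS1_eq, csSup_Icc (neg_le_self (by positivity))]
  ring

lemma lSPO1_one (c : ℝ) : lSPO1 1 c = (|c| - c) / 2 := by
  rw [lSPO1, WS1_one, zS1_eq, Set.image_singleton, csSup_singleton]
  ring

/-- with `S = [-1/2, 1/2]`, the prediction `ĉ = 1` pointwise dominates `ĉ = 0`
in SPO loss, strictly for `c > 0`; hence for a random cost `X` with `P(X > 0) > 0`,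
`R_SPO(1) < R_SPO(0)`, so the mean `c̄ = 0` is not a minimizer of the SPO risk. -/
theorem mean_not_spo_risk_minimizer
    {Ω : Type*} [MeasurableSpace Ω] (μ : Measure Ω) [IsProbabilityMeasure μ]
    (X : Ω → ℝ) (hX : Measurable X)
    (hmean : ∫ ω, X ω ∂μ = 0)
    (hpos : 0 < μ {ω | 0 < X ω})
    (hint1 : Integrable (fun ω => lSPO1 1 (X ω)) μ)
    (hint0 : Integrable (fun ω => lSPO1 0 (X ω)) μ) :
    (∀ c : ℝ, lSPO1 1 c ≤ lSPO1 0 c) ∧ (∀ c : ℝ, 0 < c → lSPO1 1 c < lSPO1 0 c) ∧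
      (∫ ω, lSPO1 1 (X ω) ∂μ < ∫ ω, lSPO1 0 (X ω) ∂μ) := by
  refine ⟨fun c => ?_, fun c hc => ?_, ?_⟩
  · rw [lSPO1_zero, lSPO1_one]
    have := neg_abs_le c
    linarith
  · rw [lSPO1_zero, lSPO1_one, abs_of_pos hc]
    linarith
  · set g : Ω → ℝ := fun ω => lSPO1 0 (X ω) - lSPO1 1 (X ω) with hg
    have hgnn : 0 ≤ g := by
      intro ω
      simp only [hg, lSPO1_zero, lSPO1_one, Pi.zero_apply]
      have := neg_abs_le (X ω)
      linarith
    have hgint : Integrable g μ := hint0.sub hint1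
    have hsupp : Function.support g = {ω | 0 < X ω} := by
      ext ω
      simp only [Function.mem_support, hg, lSPO1_zero, lSPO1_one, Set.mem_setOf_eq]
      constructor
      · intro h
        by_contra hle
        push_neg at hle
        rw [abs_of_nonpos hle] at h
        apply h; ring
      · intro h
        rw [abs_of_pos h]
        intro h'
        nlinarith
    have : 0 < ∫ ω, g ω ∂μ := by
      rw [integral_pos_iff_support_of_nonneg hgnn hgint, hsupp]
      exact hpos
    rw [integral_sub hint0 hint1] at this
    linarith
end
end

section
/- In Example with S the 2-simplex with vertices (0,0), (1,0), (0,1), and c a two-point distribution equal to (−2,1) or (0,−1) each with probability 1/2: the mean is c̄ = (−1,0), W*(c̄) = {(1,0)}, E[w*(c)] = (1/2, 1/2), and the candidate c* = (−1/4, −1/2) satisfies E[w*(2c* − c)] = (1/2, 1/2) = E[w*(c)], yet W*(c*) = {(0,1)} ⊄ W*(c̄); hence c* stationary for SPO+ risk is not an SPO risk minimizer. -/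
open MeasureTheory Set

noncomputable section

lemma simplex_eq :
    convexHull ℝ ({![0, 0], ![1, 0], ![0, 1]} : Set (Fin 2 → ℝ)) =
      {w : Fin 2 → ℝ | 0 ≤ w 0 ∧ 0 ≤ w 1 ∧ w 0 + w 1 ≤ 1} := by
  apply Subset.antisymm
  · apply convexHull_min
    · intro x hx
      simp only [Set.mem_insert_iff, Set.mem_singleton_iff] at hx
      rcases hx with h | h | h <;> subst h <;> simp [Set.mem_setOf_eq]
    · intro x hx y hy a b ha hb hab
      simp only [Set.mem_setOf_eq] at *
      refine ⟨?_, ?_, ?_⟩ <;> simp only [Pi.add_apply, Pi.smul_apply, smul_eq_mul] <;>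
        nlinarith [hx.1, hx.2.1, hx.2.2, hy.1, hy.2.1, hy.2.2]
  · intro w hw
    obtain ⟨h0, h1, h2⟩ := hw
    have := Finset.centerMass_mem_convexHull (Finset.univ : Finset (Fin 3))
      (w := ![1 - w 0 - w 1, w 0, w 1])
      (z := (![![0, 0], ![1, 0], ![0, 1]] : Fin 3 → Fin 2 → ℝ))
      (s := ({![0, 0], ![1, 0], ![0, 1]} : Set (Fin 2 → ℝ)))
      (by intro i _; fin_cases i <;> simp <;> linarith)
      (by simp [Fin.sum_univ_three]; linarith)
      (by intro i _; fin_cases i <;> simp)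
    convert this using 1
    rw [Finset.centerMass]
    simp [Fin.sum_univ_three]
    funext i
    fin_cases i <;> simp <;> ring

lemma dotp_two (c w : Fin 2 → ℝ) : dotp c w = c 0 * w 0 + c 1 * w 1 := by
  simp [dotp, Fin.sum_univ_two]

lemma WS_singleton (c v : Fin 2 → ℝ)
    (hv : 0 ≤ v 0 ∧ 0 ≤ v 1 ∧ v 0 + v 1 ≤ 1)
    (hopt : ∀ w : Fin 2 → ℝ, 0 ≤ w 0 → 0 ≤ w 1 → w 0 + w 1 ≤ 1 →
      c 0 * v 0 + c 1 * v 1 ≤ c 0 * w 0 + c 1 * w 1)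
    (huniq : ∀ w : Fin 2 → ℝ, 0 ≤ w 0 → 0 ≤ w 1 → w 0 + w 1 ≤ 1 →
      c 0 * w 0 + c 1 * w 1 ≤ c 0 * v 0 + c 1 * v 1 → w 0 = v 0 ∧ w 1 = v 1) :
    WS {w : Fin 2 → ℝ | 0 ≤ w 0 ∧ 0 ≤ w 1 ∧ w 0 + w 1 ≤ 1} c = {v} := by
  ext w
  simp only [WS, Set.mem_setOf_eq, Set.mem_singleton_iff]
  constructor
  · rintro ⟨⟨h0, h1, h2⟩, hmin⟩
    have hle := hmin v (by exact hv)
    rw [dotp_two, dotp_two] at hle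
    obtain ⟨e0, e1⟩ := huniq w h0 h1 h2 hle
    funext i
    fin_cases i <;> assumption
  · rintro rfl
    refine ⟨hv, ?_⟩
    rintro u ⟨u0, u1, u2⟩
    rw [dotp_two, dotp_two]
    exact hopt u u0 u1 u2

/-- on the 2-simplex `S = conv{(0,0),(1,0),(0,1)}` with the two-point
distribution `c ∈ {(−2,1), (0,−1)}` (each w.p. 1/2): the mean is `c̄ = (−1,0)`,
`W*(c̄) = {(1,0)}`, `E[w*(c)] = (1/2,1/2)`, the candidate `c* = (−1/4,−1/2)` satisfies the
SPO+ stationarity condition `E[w*(2c* − c)] = (1/2,1/2) = E[w*(c)]`, and yet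
`W*(c*) = {(0,1)} ⊄ W*(c̄)`; hence `c*` is not an SPO risk minimizer. -/
theorem spo_plus_inconsistent_example
    (S : Set (Fin 2 → ℝ))
    (hSdef : S = convexHull ℝ {![0, 0], ![1, 0], ![0, 1]})
    (wstar : (Fin 2 → ℝ) → (Fin 2 → ℝ)) (hw : ∀ v, wstar v ∈ WS S v)
    (c₁ c₂ cstar : Fin 2 → ℝ)
    (hc₁ : c₁ = ![-2, 1]) (hc₂ : c₂ = ![0, -1]) (hcstar : cstar = ![-1/4, -1/2]) :
    (1 / 2 : ℝ) • c₁ + (1 / 2 : ℝ) • c₂ = ![-1, 0] ∧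
    WS S ![-1, 0] = {![1, 0]} ∧
    (1 / 2 : ℝ) • wstar c₁ + (1 / 2 : ℝ) • wstar c₂ = ![1/2, 1/2] ∧
    (1 / 2 : ℝ) • wstar ((2 : ℝ) • cstar - c₁) + (1 / 2 : ℝ) • wstar ((2 : ℝ) • cstar - c₂) =
      ![1/2, 1/2] ∧
    WS S cstar = {![0, 1]} ∧
    ¬ (WS S cstar ⊆ WS S ![-1, 0]) := by
  have hS : S = {w : Fin 2 → ℝ | 0 ≤ w 0 ∧ 0 ≤ w 1 ∧ w 0 + w 1 ≤ 1} := by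
    rw [hSdef, simplex_eq]
  subst hc₁ hc₂ hcstar
  have hbar : WS S ![-1, 0] = {![1, 0]} := by
    rw [hS]; apply WS_singleton <;> norm_num
    · intro w h0 h1 h2; linarith
    · intro w h0 h1 h2 hle; constructor <;> linarith
  have hWc₁ : WS S ![-2, 1] = {![1, 0]} := by
    rw [hS]; apply WS_singleton <;> norm_num
    · intro w h0 h1 h2; linarith
    · intro w h0 h1 h2 hle; constructor <;> linarith
  have hWc₂ : WS S ![0, -1] = {![0, 1]} := by
    rw [hS]; apply WS_singleton <;> norm_num
    · intro w h0 h1 h2; linarith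
    · intro w h0 h1 h2 hle; constructor <;> linarith
  have hWstar : WS S ![-1/4, -1/2] = {![0, 1]} := by
    rw [hS]; apply WS_singleton <;> norm_num
    · intro w h0 h1 h2; linarith
    · intro w h0 h1 h2 hle; constructor <;> linarith
  have hd₁ : (2 : ℝ) • (![-1/4, -1/2] : Fin 2 → ℝ) - ![-2, 1] = ![3/2, -2] := by
    funext i; fin_cases i <;> simp <;> norm_num
  have hd₂ : (2 : ℝ) • (![-1/4, -1/2] : Fin 2 → ℝ) - ![0, -1] = ![-1/2, 0] := by
    funext i; fin_cases i <;> simp <;> norm_num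
  have hW₁ : WS S ![3/2, -2] = {![0, 1]} := by
    rw [hS]; apply WS_singleton <;> norm_num
    · intro w h0 h1 h2; linarith
    · intro w h0 h1 h2 hle; constructor <;> linarith
  have hW₂ : WS S ![-1/2, 0] = {![1, 0]} := by
    rw [hS]; apply WS_singleton <;> norm_num
    · intro w h0 h1 h2; linarith
    · intro w h0 h1 h2 hle; constructor <;> linarith
  have e₁ : wstar ![-2, 1] = ![1, 0] := by have := hw ![-2, 1]; rwa [hWc₁] at this
  have e₂ : wstar ![0, -1] = ![0, 1] := by have := hw ![0, -1]; rwa [hWc₂] at this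
  have e₃ : wstar ((2 : ℝ) • (![-1/4, -1/2] : Fin 2 → ℝ) - ![-2, 1]) = ![0, 1] := by
    have := hw ((2 : ℝ) • (![-1/4, -1/2] : Fin 2 → ℝ) - ![-2, 1])
    rw [hd₁] at this ⊢; rwa [hW₁] at this
  have e₄ : wstar ((2 : ℝ) • (![-1/4, -1/2] : Fin 2 → ℝ) - ![0, -1]) = ![1, 0] := by
    have := hw ((2 : ℝ) • (![-1/4, -1/2] : Fin 2 → ℝ) - ![0, -1])
    rw [hd₂] at this ⊢; rwa [hW₂] at this
  refine ⟨?_, hbar, ?_, ?_, hWstar, ?_⟩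
  · funext i; fin_cases i <;> simp
  · rw [e₁, e₂]; funext i; fin_cases i <;> simp
  · rw [e₃, e₄]; funext i; fin_cases i <;> simp
  · rw [hWstar, hbar]
    intro h
    have := h (Set.mem_singleton _)
    rw [Set.mem_singleton_iff] at this
    have := congrFun this 0
    norm_num at this
end
end

section
/- If the distribution of c is centrally symmetric about its mean c̄ (i.e., c − c̄ equals c̄ − c in distribution) and w* is a measurable selection of argmin, then E_c[w*(c)] = E_c[w*(2c̄ − c)]; that is, the mean c̄ satisfies the first-order optimality condition 0 ∈ ∂R_SPO+(c̄). -/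
open MeasureTheory Set

noncomputable section

/-- if the distribution of `c` is centrally symmetric about its mean `c̄`
(i.e. `2c̄ − c` has the same distribution as `c`), then `E[w*(c)] = E[w*(2c̄ − c)]`, i.e.
the mean `c̄` satisfies the first-order optimality condition for the SPO+ risk. -/
theorem symmetric_implies_stationarity {d : ℕ} (S : Set (Fin d → ℝ))
    (hS : S.Nonempty) (hSc : IsCompact S)
    (wstar : (Fin d → ℝ) → (Fin d → ℝ)) (hw : ∀ v, wstar v ∈ WS S v)
    (hwm : Measurable wstar)
    {Ω : Type*} [MeasurableSpace Ω] (μ : Measure Ω) [IsProbabilityMeasure μ]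
    (c : Ω → Fin d → ℝ) (hc : Measurable c)
    (cbar : Fin d → ℝ) (hcbar : ∀ i, cbar i = ∫ ω, c ω i ∂μ)
    (hsymm : Measure.map c μ = Measure.map (fun ω => (2 : ℝ) • cbar - c ω) μ)
    (hint : Integrable (fun ω => wstar (c ω)) μ) :
    (∫ ω, wstar (c ω) ∂μ) = ∫ ω, wstar ((2 : ℝ) • cbar - c ω) ∂μ := by
  have hc2 : Measurable (fun ω => (2 : ℝ) • cbar - c ω) := by
    exact (measurable_const.sub hc)
  rw [← integral_map hc.aemeasurable hwm.aestronglyMeasurable,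
    ← integral_map hc2.aemeasurable hwm.aestronglyMeasurable, hsymm]
end
end
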